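/- There exists a skew brace B of abelian type of order 8, with additive group isomorphic to C₄ × C₂ and multiplicative group isomorphic to the dihedral group of order 8, such that B³ = 0, B^{(3)} ≠ 0 and B^{(4)} = 0. Hence the upper bound 3 for the right nilpotency class of left nilpotent skew braces of class 2 of abelian type is best possible. -/
import Mathlib


/-- A (left) skew brace: a set with two group structures `(B,+)` and `(B,·)`
satisfying `a·(b+c) = a·b - a + a·c`. -/
class SkewBrace (B : Type*) extends AddGroup B, Group B where
  mul_add_compat : ∀ a b c : B, a * (b + c) = a * b - a + a * c

namespace SkewBrace

variable {B : Type*} [SkewBrace B]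

/-- The star product `a ∗ b = -a + a·b - b`. -/
def star (a b : B) : B := -a + a * b - b

/-- For subsets `X, Y ⊆ B`, `X ∗ Y` is the additive subgroup generated by
all `x ∗ y` with `x ∈ X`, `y ∈ Y`. -/
def starSet (X Y : Set B) : AddSubgroup B :=
  AddSubgroup.closure (Set.image2 star X Y)

/-- The left series, indexed so that `leftSeries B n = B^{n+1}`:
`leftSeries B 0 = B¹ = B` and `leftSeries B (n+1) = B ∗ leftSeries B n`. -/
def leftSeries (B : Type*) [SkewBrace B] : ℕ → AddSubgroup B
  | 0 => ⊤
  | n + 1 => starSet Set.univ (leftSeries B n)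

/-- The right series, indexed so that `rightSeries B n = B^{(n+1)}`:
`rightSeries B 0 = B^{(1)} = B` and `rightSeries B (n+1) = (rightSeries B n) ∗ B`. -/
def rightSeries (B : Type*) [SkewBrace B] : ℕ → AddSubgroup B
  | 0 => ⊤
  | n + 1 => starSet (rightSeries B n : Set B) Set.univ

end SkewBrace

/-! ### The concrete example -/

structure Br where
  x : ZMod 4
  y : ZMod 2
deriving DecidableEq, Fintype

namespace Br

instance : Add Br := ⟨fun a b => ⟨a.x + b.x, a.y + b.y⟩⟩
instance : Zero Br := ⟨⟨0, 0⟩⟩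
instance : Neg Br := ⟨fun a => ⟨-a.x, -a.y⟩⟩

instance : AddCommGroup Br where
  add_assoc := by decide
  zero_add := by decide
  add_zero := by decide
  neg_add_cancel := by decide
  add_comm := by decide
  nsmul := nsmulRec
  zsmul := zsmulRec

/-- sign `(-1)^a` -/
def sgn (a : ZMod 4) : ZMod 4 := if a = 1 ∨ a = 3 then -1 else 1

/-- cocycle coefficient -/
def cc (a : ZMod 4) : ZMod 2 := if a = 1 ∨ a = 2 then 1 else 0

instance : Mul Br :=
  ⟨fun a b => ⟨a.x + sgn a.x * b.x, a.y + b.y + cc a.x * (b.x.val : ZMod 2)⟩⟩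
instance : One Br := ⟨⟨0, 0⟩⟩
instance : Inv Br := ⟨fun a => ⟨a.x, if a.x = 1 then a.y + 1 else a.y⟩⟩

instance : Group Br where
  mul_assoc := by decide
  one_mul := by decide
  mul_one := by decide
  inv_mul_cancel := by decide

instance instSkewBrace : SkewBrace Br where
  mul_add_compat := by decide

/-- The subgroup `{z | z.x = 0 ∨ z.x = 2}` (the image of `B²`). -/
def K : AddSubgroup Br where
  carrier := {z | z.x = 0 ∨ z.x = 2}
  zero_mem' := Or.inl rfl
  add_mem' := fun {a b} ha hb =>
    (by decide : ∀ a b : Br, (a.x = 0 ∨ a.x = 2) → (b.x = 0 ∨ b.x = 2) →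
      ((a + b).x = 0 ∨ (a + b).x = 2)) a b ha hb
  neg_mem' := fun {a} ha =>
    (by decide : ∀ a : Br, (a.x = 0 ∨ a.x = 2) → ((-a).x = 0 ∨ (-a).x = 2)) a ha

open SkewBrace

lemma left1_le : leftSeries Br 1 ≤ K := by
  rw [show leftSeries Br 1 = starSet Set.univ (leftSeries Br 0) from rfl, starSet]
  refine (AddSubgroup.closure_le K).2 ?_
  rintro z ⟨a, -, b, -, rfl⟩
  show (SkewBrace.star a b).x = 0 ∨ (SkewBrace.star a b).x = 2
  exact (by decide : ∀ a b : Br, (SkewBrace.star a b).x = 0 ∨ (SkewBrace.star a b).x = 2) a b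

lemma right1_le : rightSeries Br 1 ≤ K := by
  rw [show rightSeries Br 1 = starSet (rightSeries Br 0 : Set Br) Set.univ from rfl, starSet]
  refine (AddSubgroup.closure_le K).2 ?_
  rintro z ⟨a, -, b, -, rfl⟩
  show (SkewBrace.star a b).x = 0 ∨ (SkewBrace.star a b).x = 2
  exact (by decide : ∀ a b : Br, (SkewBrace.star a b).x = 0 ∨ (SkewBrace.star a b).x = 2) a b

lemma left2_eq_bot : leftSeries Br 2 = ⊥ := by
  rw [eq_bot_iff]
  rw [show leftSeries Br 2 = starSet Set.univ (leftSeries Br 1) from rfl, starSet]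
  refine (AddSubgroup.closure_le ⊥).2 ?_
  rintro z ⟨a, -, b, hb, rfl⟩
  have hbK : b ∈ K := left1_le hb
  have : SkewBrace.star a b = 0 :=
    (by decide : ∀ a b : Br, (b.x = 0 ∨ b.x = 2) → SkewBrace.star a b = 0) a b hbK
  simp [this, AddSubgroup.mem_bot]

/-- The subgroup `{z | z.x = 0}`. -/
def M : AddSubgroup Br where
  carrier := {z | z.x = 0}
  zero_mem' := rfl
  add_mem' := fun {a b} ha hb =>
    (by decide : ∀ a b : Br, a.x = 0 → b.x = 0 → (a + b).x = 0) a b ha hb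
  neg_mem' := fun {a} ha => (by decide : ∀ a : Br, a.x = 0 → (-a).x = 0) a ha

lemma right2_le : rightSeries Br 2 ≤ M := by
  rw [show rightSeries Br 2 = starSet (rightSeries Br 1 : Set Br) Set.univ from rfl, starSet]
  refine (AddSubgroup.closure_le M).2 ?_
  rintro z ⟨a, ha, b, -, rfl⟩
  have haK : a ∈ K := right1_le ha
  show (SkewBrace.star a b).x = 0
  exact (by decide : ∀ a b : Br, (a.x = 0 ∨ a.x = 2) → (SkewBrace.star a b).x = 0) a b haK

lemma right3_eq_bot : rightSeries Br 3 = ⊥ := by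
  rw [eq_bot_iff]
  rw [show rightSeries Br 3 = starSet (rightSeries Br 2 : Set Br) Set.univ from rfl, starSet]
  refine (AddSubgroup.closure_le ⊥).2 ?_
  rintro z ⟨a, ha, b, -, rfl⟩
  have haM : a ∈ M := right2_le ha
  have : SkewBrace.star a b = 0 :=
    (by decide : ∀ a b : Br, a.x = 0 → SkewBrace.star a b = 0) a b haM
  simp [this, AddSubgroup.mem_bot]

lemma mem_right1 : (⟨2, 0⟩ : Br) ∈ rightSeries Br 1 := by
  rw [show rightSeries Br 1 = starSet (rightSeries Br 0 : Set Br) Set.univ from rfl, starSet]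
  apply AddSubgroup.subset_closure
  exact ⟨⟨3, 0⟩, by simp [rightSeries], ⟨1, 0⟩, Set.mem_univ _,
    by decide⟩

lemma right2_ne_bot : rightSeries Br 2 ≠ ⊥ := by
  intro h
  have hmem : (⟨0, 1⟩ : Br) ∈ rightSeries Br 2 := by
    rw [show rightSeries Br 2 = starSet (rightSeries Br 1 : Set Br) Set.univ from rfl, starSet]
    apply AddSubgroup.subset_closure
    exact ⟨⟨2, 0⟩, mem_right1, ⟨1, 0⟩, Set.mem_univ _, by decide⟩
  rw [h, AddSubgroup.mem_bot] at hmem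
  exact (by decide : (⟨0, 1⟩ : Br) ≠ 0) hmem

/-- Additive isomorphism with `ZMod 4 × ZMod 2`. -/
def addEquiv : Br ≃+ (ZMod 4 × ZMod 2) where
  toFun z := (z.x, z.y)
  invFun p := ⟨p.1, p.2⟩
  left_inv z := rfl
  right_inv p := rfl
  map_add' a b := rfl

/-- Multiplicative isomorphism with `DihedralGroup 4`. -/
def mulEquiv : Br ≃* DihedralGroup 4 where
  toFun z :=
    if z = ⟨0, 0⟩ then .r 0 else if z = ⟨1, 0⟩ then .r 1
    else if z = ⟨0, 1⟩ then .r 2 else if z = ⟨1, 1⟩ then .r 3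
    else if z = ⟨2, 0⟩ then .sr 0 else if z = ⟨3, 1⟩ then .sr 1
    else if z = ⟨2, 1⟩ then .sr 2 else .sr 3
  invFun w :=
    match w with
    | .r i => if i = 0 then ⟨0, 0⟩ else if i = 1 then ⟨1, 0⟩
              else if i = 2 then ⟨0, 1⟩ else ⟨1, 1⟩
    | .sr i => if i = 0 then ⟨2, 0⟩ else if i = 1 then ⟨3, 1⟩
              else if i = 2 then ⟨2, 1⟩ else ⟨3, 0⟩
  left_inv := by decide
  right_inv := by decide
  map_mul' := by decide

end Br

open SkewBrace in
/-- There is a skew brace `B` of abelian type of order `8`, with additive group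
`C₄ × C₂` and multiplicative group dihedral of order `8`, such that `B³ = 0`,
`B^{(3)} ≠ 0` and `B^{(4)} = 0`; so the bound `3` on the right nilpotency class
in the abelian type case is best possible.
(`leftSeries B n = B^{n+1}`, `rightSeries B n = B^{(n+1)}`.) -/
theorem exists_abelian_type_right_class_exactly_three :
    ∃ (B : Type) (_inst : SkewBrace B),
      Nat.card B = 8 ∧
      Nonempty (B ≃+ (ZMod 4 × ZMod 2)) ∧
      Nonempty (B ≃* DihedralGroup 4) ∧
      leftSeries B 2 = ⊥ ∧
      rightSeries B 2 ≠ ⊥ ∧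
      rightSeries B 3 = ⊥ := by
  refine ⟨Br, Br.instSkewBrace, ?_, ⟨Br.addEquiv⟩, ⟨Br.mulEquiv⟩,
    Br.left2_eq_bot, Br.right2_ne_bot, Br.right3_eq_bot⟩
  rw [Nat.card_eq_fintype_card]
  decide
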